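/- For all integers c ≥ 7 and g ≥ 1, the quantity t_p(c,g) satisfies the recurrence t_p(c,g) = t_p(c−2,g−1) + t_p(c−4,g) + t_p(c−4,g−1). -/

import Mathlib

/-- `tpKnot c g` is t_p(c,g), the number of words of palindromic type representing
2-bridge knots of crossing number `c` and genus `g`, given by the explicit formula
t_p(c,g) = (-1)^(c'-g-1) * Σ_{n=0}^{c'-g-1} (-1)^n * binom(n+g-1, n) with
c' = ⌊(c+1)/2⌋, the sum being empty when c' - g - 1 < 0, and t_p(c,0) = 0. -/
def tpKnot (c g : ℕ) : ℤ :=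
  if g = 0 then 0
  else (-1 : ℤ) ^ ((c + 1) / 2 - g - 1) *
    ∑ n ∈ Finset.range ((c + 1) / 2 - g), (-1 : ℤ) ^ n * (Nat.choose (n + g - 1) n)

/-!
Put `m = g - 1` and `k = c' - g`. Then t_p(c, g) is the reversed alternating sum
`altChooseSum m k = C(k-1+m, k-1) - C(k-2+m, k-2) + ⋯ ± C(m, 0)`. Pascal's rule gives
`altChooseSum (m+1) (k+1) = altChooseSum (m+1) k + altChooseSum m (k+1)`; used twice, it writes
`altChooseSum (m+1) (k+2) - altChooseSum (m+1) k` as `altChooseSum m (k+2) + altChooseSum m (k+1)`.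
This is the recurrence, because `c ↦ c - 2` lowers `c'` by one. For `g = 1` all binomials
are `1`, so `altChooseSum 0` is `2`-periodic in `k`.
-/

namespace TpKnot

/-- `revAltSum x k = x (k-1) - x (k-2) + ⋯ ± x 0`. -/
def revAltSum (x : ℕ → ℤ) : ℕ → ℤ
  | 0 => 0
  | k + 1 => x k - revAltSum x k

theorem revAltSum_eq_neg_one_pow_mul_sum (x : ℕ → ℤ) (k : ℕ) :
    (-1) ^ (k + 1) * ∑ n ∈ Finset.range k, (-1) ^ n * x n = revAltSum x k := by
  induction k with
  | zero => simp [revAltSum]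
  | succ k ih =>
    have sq_neg_one_pow : ((-1 : ℤ) ^ k) ^ 2 = 1 := by
      rw [← pow_mul, pow_mul', neg_one_sq, one_pow]
    rw [revAltSum, ← ih, Finset.sum_range_succ]
    linear_combination x k * sq_neg_one_pow

theorem revAltSum_add_two (x : ℕ → ℤ) (k : ℕ) :
    revAltSum x (k + 2) = x (k + 1) - x k + revAltSum x k := by
  simp only [revAltSum]
  ring

theorem revAltSum_add_revAltSum_succ (x : ℕ → ℤ) (k : ℕ) :
    revAltSum x k + revAltSum x (k + 1) = x k := by
  simp [revAltSum]

def altChooseSum (m k : ℕ) : ℤ :=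
  revAltSum (fun n => ((n + m).choose n : ℤ)) k

theorem altChooseSum_succ_succ (m k : ℕ) :
    altChooseSum (m + 1) (k + 1) = altChooseSum (m + 1) k + altChooseSum m (k + 1) := by
  induction k with
  | zero => simp [altChooseSum, revAltSum]
  | succ k ih =>
    have pascal : ((k + 1 + (m + 1)).choose (k + 1) : ℤ)
        = ((k + (m + 1)).choose k : ℤ) + ((k + 1 + m).choose (k + 1) : ℤ) := by
      rw [show k + 1 + (m + 1) = (k + 1 + m) + 1 by omega, Nat.choose_succ_succ',
        show k + 1 + m = k + (m + 1) by omega]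
      push_cast
      ring
    have consecutive := revAltSum_add_revAltSum_succ (fun n => ((n + (m + 1)).choose n : ℤ)) k
    simp only [altChooseSum, revAltSum] at ih consecutive ⊢
    rw [pascal]
    linarith

theorem altChooseSum_succ (m k : ℕ) :
    altChooseSum (m + 1) k
      = altChooseSum m k + altChooseSum (m + 1) (k - 2) + altChooseSum m (k - 1) := by
  rcases k with _ | _ | k
  · simp [altChooseSum, revAltSum]
  · simp [altChooseSum, revAltSum]
  · rw [show k + 1 + 1 - 2 = k from rfl, show k + 1 + 1 - 1 = k + 1 from rfl,
      altChooseSum_succ_succ, altChooseSum_succ_succ]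
    ring

theorem altChooseSum_zero_add_two (k : ℕ) : altChooseSum 0 (k + 2) = altChooseSum 0 k := by
  simp [altChooseSum, revAltSum_add_two]

end TpKnot

open TpKnot

theorem tpKnot_succ (c m : ℕ) : tpKnot c (m + 1) = altChooseSum m ((c + 1) / 2 - (m + 1)) := by
  simp only [tpKnot, altChooseSum, ← revAltSum_eq_neg_one_pow_mul_sum,
    Nat.add_one_ne_zero, if_false]
  rcases (c + 1) / 2 - (m + 1) with _ | k
  · simp
  · simp [pow_succ]

theorem tpKnot_recurrence_general (c g : ℕ) (hc : 7 ≤ c) :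
    tpKnot c g = tpKnot (c - 2) (g - 1) + tpKnot (c - 4) g + tpKnot (c - 4) (g - 1) := by
  have half_sub_two : (c - 2 + 1) / 2 = (c + 1) / 2 - 1 := by omega
  have half_sub_four : (c - 4 + 1) / 2 = (c + 1) / 2 - 2 := by omega
  rcases g with _ | _ | m
  · simp [tpKnot]
  · obtain ⟨k, hk⟩ : ∃ k, (c + 1) / 2 - 1 = k + 2 := ⟨(c + 1) / 2 - 3, by omega⟩
    have hk' : (c + 1) / 2 - 2 - 1 = k := by omega
    simp only [tpKnot_succ, half_sub_four, hk, hk', Nat.sub_self]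
    simp [tpKnot, altChooseSum_zero_add_two]
  · simp only [tpKnot_succ, Nat.add_sub_cancel, half_sub_two, half_sub_four]
    rw [altChooseSum_succ, show (c + 1) / 2 - 1 - (m + 1) = (c + 1) / 2 - (m + 2) by omega,
      show (c + 1) / 2 - 2 - (m + 1) = (c + 1) / 2 - (m + 2) - 1 by omega,
      show (c + 1) / 2 - 2 - (m + 2) = (c + 1) / 2 - (m + 2) - 2 by omega]

/-- For all integers c ≥ 7 and g ≥ 1,
t_p(c,g) = t_p(c−2,g−1) + t_p(c−4,g) + t_p(c−4,g−1). -/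
theorem tpKnot_recurrence (c g : ℕ) (hc : 7 ≤ c) (hg : 1 ≤ g) :
    tpKnot c g = tpKnot (c - 2) (g - 1) + tpKnot (c - 4) g + tpKnot (c - 4) (g - 1) :=
  tpKnot_recurrence_general c g hc
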